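/- Let x = (x₁,x₂,x₃,x₄) ∈ ℂ⁴ with x₁ ≠ 0, x₂ ≠ 0, x₃ ≠ 0 and x₄ ≠ 0. Then the seven vectors a₁(x),…,a₇(x) ∈ ℂ¹² are linearly independent over ℂ. -/

import Mathlib

/-!
Restricted to the seven coordinates `hmPivots`, one chosen for each vector, `a₁, …, a₇` form a
lower triangular matrix with diagonal `x₁x₄, x₁x₃, 1, x₁, x₂, x₃, -x₃`. Its determinant
`-x₁³x₂x₃³x₄` is nonzero, so already the restricted vectors are linearly independent.
-/

-- `x 0, …, x 3` stand for `x₁, …, x₄`.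
def a1 (x : Fin 4 → ℂ) : Fin 12 → ℂ :=
  ![x 0 * x 1, 0, x 0 * x 3, 0, 0, x 2 * x 3, 0, 0, 0, 0, 0, 0]

def a2 (x : Fin 4 → ℂ) : Fin 12 → ℂ :=
  ![0, 0, 0, 0, 0, 0, 0, x 0 * x 2, 0, x 1 * x 2, x 1 * x 3, 0]

def a3 (_x : Fin 4 → ℂ) : Fin 12 → ℂ :=
  ![0, 0, 0, 1, 0, 0, 0, 0, 1, 0, 0, 0]

def a4 (x : Fin 4 → ℂ) : Fin 12 → ℂ :=
  ![0, 0, 0, 0, 0, 1, x 0, 0, 0, -x 2, -x 3, 0]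

def a5 (x : Fin 4 → ℂ) : Fin 12 → ℂ :=
  ![0, 0, x 0, 0, x 1, x 2, 0, -1, 0, 0, 0, 0]

def a6 (x : Fin 4 → ℂ) : Fin 12 → ℂ :=
  ![x 1, x 2, x 3, 0, 0, 0, 0, 0, 0, 0, -1, 0]

def a7 (x : Fin 4 → ℂ) : Fin 12 → ℂ :=
  ![1, 0, 0, 0, 0, 0, 0, 0, -x 0, 0, -x 1, -x 2]

theorem linearIndependent_of_det_restrict_ne_zero {R ι κ : Type*} [CommRing R] [IsDomain R]
    [Fintype ι] [DecidableEq ι] (v : ι → κ → R) (p : ι → κ)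
    (h : (Matrix.of fun i j => v i (p j)).det ≠ 0) : LinearIndependent R v :=
  (Matrix.linearIndependent_rows_of_det_ne_zero h).of_comp (LinearMap.funLeft R R p)

def hmPivots : Fin 7 → Fin 12 := ![2, 7, 3, 6, 4, 1, 11]

def hmPivotMinor (x : Fin 4 → ℂ) : Matrix (Fin 7) (Fin 7) ℂ :=
  Matrix.of fun i j => ![a1 x, a2 x, a3 x, a4 x, a5 x, a6 x, a7 x] i (hmPivots j)

theorem hmPivotMinor_isLowerTriangular (x : Fin 4 → ℂ) : (hmPivotMinor x).IsLowerTriangular := by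
  intro i j hij
  rw [OrderDual.toDual_lt_toDual] at hij
  fin_cases i <;> fin_cases j <;>
    simp_all [hmPivotMinor, hmPivots, a1, a2, a3, a4, a5, a6, a7]

theorem det_hmPivotMinor (x : Fin 4 → ℂ) :
    (hmPivotMinor x).det = -(x 0 ^ 3 * x 1 * x 2 ^ 3 * x 3) := by
  rw [Matrix.det_of_isLowerTriangular _ (hmPivotMinor_isLowerTriangular x), Fin.prod_univ_seven]
  simp only [hmPivotMinor, hmPivots, a1, a2, a3, a4, a5, a6, a7, Matrix.of_apply,
    Matrix.cons_val', Matrix.cons_val_fin_one, Matrix.cons_val_zero, Matrix.cons_val,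
    Matrix.cons_val_one]
  ring

theorem horrocks_mumford_stmt3 (x : Fin 4 → ℂ) (hx : ∀ i, x i ≠ 0) :
    LinearIndependent ℂ ![a1 x, a2 x, a3 x, a4 x, a5 x, a6 x, a7 x] := by
  apply linearIndependent_of_det_restrict_ne_zero _ hmPivots
  rw [← hmPivotMinor, det_hmPivotMinor]
  simp [hx]
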